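/- For every real number q with 0 < q < 1 and every real number u with 0 < |u| < min(2π, log(1/q)), one has ((u/2)/sin(u/2))² · ∏_{n=1}^∞ (1−qⁿ)⁴ / (1 − 2cos(u)·qⁿ + q^{2n})² = exp( Σ_{g=1}^∞ u^{2g} · ((−1)^{g+1} B_{2g} / (g·(2g)!)) · E_{2g}(q) ), where the infinite product and the series converge. (This is the exponentiated form of the paper's Corollary 2 identity: with y = e^{iu} and Δ(y,q) = q·∏_{n≥1}(1−qⁿ)^{20}(1−yqⁿ)²(1−y⁻¹qⁿ)², the left side equals Δ(q)/( (sin(u/2)/(u/2))² · Δ(e^{iu},q) ).) -/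

import Mathlib

/-!
Taking logarithms, the factor with `x = qⁿ` is `log ((1 - x)⁴ / |1 - x e^{iu}|⁴) =
-4 ∑_k (1 - cos ku) xᵏ / k`, and summing the geometric series over `n` turns the logarithm of the
product into `-4 ∑_k (1 - cos ku) / k · qᵏ / (1 - qᵏ)`. Expanding `cos ku` in powers of `u` and
swapping the two summations, which is legitimate because `∑_k qᵏ e^{k|u|}` converges for
`|u| < log (1/q)`, gives `∑_g 4 (-1)^g u^{2g} / (2g)! · ∑_k k^{2g-1} qᵏ / (1 - qᵏ)`: the exponent
on the right with every `E_{2g}` replaced by `E_{2g} - 1`. The remaining terms come from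
`((u/2) / sin (u/2))²`: by Euler's product `sin πx / πx = ∏_j (1 - x² / j²)` its logarithm is
`-∑_j log (1 - x²/j²)`, and expanding each logarithm and summing over `j` first produces the
values `ζ(2g)`, i.e. the Bernoulli numbers.
-/

/-- The Eisenstein series `E_{2g}(q) = 1 - (4g/B_{2g}) ∑_{k≥1} k^{2g-1} q^k/(1-q^k)`. -/
noncomputable def Eis (g : ℕ) (q : ℝ) : ℝ :=
  1 - (4 * (g : ℝ) / ((bernoulli (2 * g) : ℚ) : ℝ)) *
    ∑' k : ℕ, (((k : ℝ) + 1) ^ (2 * g - 1) * q ^ (k + 1) / (1 - q ^ (k + 1)))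

open Real Filter Topology

theorem Summable.hasSum_prod_fiberwise_iff {α β γ : Type*} [AddCommGroup α] [UniformSpace α]
    [IsUniformAddGroup α] [CompleteSpace α] [T2Space α] {f : β × γ → α} {g : β → α} {h : γ → α}
    {a : α} (hf : Summable f) (hg : ∀ b, HasSum (fun c => f (b, c)) (g b))
    (hh : ∀ c, HasSum (fun b => f (b, c)) (h c)) : HasSum g a ↔ HasSum h a := by
  have hg' : HasSum g (∑' p, f p) := hf.hasSum.prod_fiberwise hg
  have hh' : HasSum h (∑' p, f p) :=
    ((Equiv.prodComm γ β).hasSum_iff.mpr hf.hasSum).prod_fiberwise hh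
  exact ⟨fun ha => ha.unique hg' ▸ hh', fun ha => ha.unique hh' ▸ hg'⟩

theorem Real.sin_div_pos_of_abs_lt_pi {y : ℝ} (hy0 : y ≠ 0) (hy : |y| < π) : 0 < sin y / y := by
  rcases hy0.lt_or_gt with hneg | hpos
  · exact div_pos_of_neg_of_neg (sin_neg_of_neg_of_neg_pi_lt hneg (neg_lt_of_abs_lt hy)) hneg
  · exact div_pos (sin_pos_of_pos_of_lt_pi hpos (lt_of_abs_lt hy)) hpos

theorem Real.hasSum_log_euler_sin_prod {x : ℝ} (hx0 : x ≠ 0) (hx1 : |x| < 1) :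
    HasSum (fun j : ℕ => log (1 - x ^ 2 / ((j : ℝ) + 1) ^ 2)) (log (sin (π * x) / (π * x))) := by
  have hfac : ∀ j : ℕ, 0 < 1 - x ^ 2 / ((j : ℝ) + 1) ^ 2 := by
    intro j
    rw [sub_pos, div_lt_one (by positivity)]
    nlinarith [sq_abs x, abs_nonneg x, (Nat.cast_nonneg j : (0 : ℝ) ≤ j)]
  have hprod : Tendsto (fun n : ℕ => ∏ j ∈ Finset.range n, (1 - x ^ 2 / ((j : ℝ) + 1) ^ 2))
      atTop (𝓝 (sin (π * x) / (π * x))) :=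
    ((tendsto_euler_sin_prod x).div_const (π * x)).congr fun n => by
      field_simp [pi_ne_zero]
  have hsummable : Summable fun j : ℕ => log (1 - x ^ 2 / ((j : ℝ) + 1) ^ 2) := by
    have h : Summable fun j : ℕ => -(x ^ 2 / ((j : ℝ) + 1) ^ 2) := by
      simpa using (summable_pow_div_add (x ^ 2) 2 1 one_lt_two).of_norm.neg
    simpa [sub_eq_add_neg] using Real.summable_log_one_add_of_summable h
  refine (hsummable.hasSum_iff_tendsto_nat).mpr ?_
  have hsinc : sin (π * x) / (π * x) ≠ 0 := (sin_div_pos_of_abs_lt_pi (by positivity) (by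
    rw [abs_mul, abs_of_pos pi_pos]; nlinarith [pi_pos])).ne'
  refine ((continuousAt_log hsinc).tendsto.comp hprod).congr fun n => ?_
  simp [Real.log_prod fun j _ => (hfac j).ne']

theorem summable_sq_div_sq_pow_div {x : ℝ} (hx : x ^ 2 < 1) :
    Summable fun p : ℕ × ℕ => (x ^ 2 / ((p.1 : ℝ) + 1) ^ 2) ^ (p.2 + 1) / ((p.2 : ℝ) + 1) := by
  refine ((summable_nat_add_iff 1 |>.mpr (summable_one_div_nat_pow.mpr one_lt_two)).mul_of_nonneg
    ((summable_geometric_of_lt_one (sq_nonneg x) hx).mul_left (x ^ 2))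
    (fun _ => by positivity) (fun _ => by positivity)).of_norm_bounded fun ⟨j, k⟩ => ?_
  have hj : (1 : ℝ) ≤ ((j : ℝ) + 1) ^ 2 := one_le_pow₀ (by linarith [j.cast_nonneg (α := ℝ)])
  rw [norm_of_nonneg (by positivity)]
  calc (x ^ 2 / ((j : ℝ) + 1) ^ 2) ^ (k + 1) / ((k : ℝ) + 1)
      ≤ x ^ 2 / ((j : ℝ) + 1) ^ 2 * (x ^ 2 / ((j : ℝ) + 1) ^ 2) ^ k := by
        rw [← pow_succ']
        exact div_le_self (by positivity) (by linarith [k.cast_nonneg (α := ℝ)])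
    _ ≤ x ^ 2 / ((j : ℝ) + 1) ^ 2 * (x ^ 2) ^ k := by
        gcongr
        exact div_le_self (sq_nonneg x) hj
    _ = 1 / (((j + 1 : ℕ) : ℝ)) ^ 2 * (x ^ 2 * (x ^ 2) ^ k) := by push_cast; ring

theorem Real.hasSum_log_sin_div_zeta {x : ℝ} (hx0 : x ≠ 0) (hx1 : |x| < 1) :
    HasSum (fun k : ℕ => -(x ^ (2 * (k + 1)) / ((k : ℝ) + 1)) *
        ((-1 : ℝ) ^ (k + 1 + 1) * 2 ^ (2 * (k + 1) - 1) * π ^ (2 * (k + 1)) *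
          ((bernoulli (2 * (k + 1)) : ℚ) : ℝ) / ((2 * (k + 1)).factorial : ℝ)))
      (log (sin (π * x) / (π * x))) := by
  have hx2 : x ^ 2 < 1 := by nlinarith [sq_abs x, abs_nonneg x]
  set C : ℕ × ℕ → ℝ := fun p => -((x ^ 2 / ((p.1 : ℝ) + 1) ^ 2) ^ (p.2 + 1) / ((p.2 : ℝ) + 1))
  have hfiber_j : ∀ j : ℕ, HasSum (fun k => C (j, k)) (log (1 - x ^ 2 / ((j : ℝ) + 1) ^ 2)) := by
    intro j
    have ht : |x ^ 2 / ((j : ℝ) + 1) ^ 2| < 1 := by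
      rw [abs_of_nonneg (by positivity), div_lt_one (by positivity)]
      nlinarith [j.cast_nonneg (α := ℝ)]
    simpa using (hasSum_pow_div_log_of_abs_lt_one ht).neg
  refine ((summable_sq_div_sq_pow_div hx2).neg.hasSum_prod_fiberwise_iff hfiber_j
    fun k => ?_).mp (hasSum_log_euler_sin_prod hx0 hx1)
  have hzeta := (hasSum_nat_add_iff' 1).mpr (hasSum_zeta_nat (k := k + 1) k.add_one_ne_zero)
  simp only [Finset.sum_range_one, Nat.cast_zero, zero_pow (by omega : 2 * (k + 1) ≠ 0),
    div_zero, sub_zero] at hzeta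
  refine (hzeta.mul_left (-(x ^ (2 * (k + 1)) / ((k : ℝ) + 1)))).congr_fun fun j => ?_
  push_cast
  rw [div_pow, ← pow_mul, ← pow_mul]
  ring

theorem Real.hasSum_two_log_div_sin_half {u : ℝ} (hu0 : u ≠ 0) (hu : |u| < 2 * π) :
    HasSum (fun g : ℕ => u ^ (2 * (g + 1)) *
        ((-1 : ℝ) ^ (g + 1 + 1) * ((bernoulli (2 * (g + 1)) : ℚ) : ℝ) /
          (((g : ℝ) + 1) * ((Nat.factorial (2 * (g + 1)) : ℕ) : ℝ))))
      (2 * log ((u / 2) / sin (u / 2))) := by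
  have hx1 : |u / (2 * π)| < 1 := by
    rwa [abs_div, abs_of_pos (by positivity : (0 : ℝ) < 2 * π), div_lt_one (by positivity)]
  have h := (hasSum_log_sin_div_zeta (div_ne_zero hu0 (by positivity)) hx1).mul_left (-2)
  rw [show π * (u / (2 * π)) = u / 2 by field_simp, neg_mul, ← mul_neg] at h
  rw [← inv_div (sin (u / 2)), log_inv]
  refine h.congr_fun fun g => ?_
  rw [show 2 * (g + 1) - 1 = 2 * g + 1 by omega, div_pow, mul_pow,
    show 2 * (g + 1) = 2 * g + 1 + 1 by ring, pow_succ (2 : ℝ)]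
  field_simp

theorem Real.one_sub_two_mul_cos_mul_add_sq_pos {x : ℝ} (hx : |x| < 1) (u : ℝ) :
    0 < 1 - 2 * cos u * x + x ^ 2 := by
  have hcos : cos u * x ≤ |x| := (le_abs_self _).trans <| by
    rw [abs_mul]; exact mul_le_of_le_one_left (abs_nonneg x) (abs_cos_le_one u)
  nlinarith [sq_abs x]

theorem Real.hasSum_cos_mul_pow_div {x : ℝ} (hx : |x| < 1) (u : ℝ) :
    HasSum (fun k : ℕ => 2 * cos (((k : ℝ) + 1) * u) * x ^ (k + 1) / ((k : ℝ) + 1))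
      (-log (1 - 2 * cos u * x + x ^ 2)) := by
  set z : ℂ := x * Complex.exp (u * Complex.I)
  have hz : ‖z‖ < 1 := by simpa [z, Complex.norm_exp_ofReal_mul_I] using hx
  have hnorm : ‖1 - z‖ ^ 2 = 1 - 2 * cos u * x + x ^ 2 := by
    rw [Complex.sq_norm, Complex.normSq_apply]
    simp only [z, Complex.sub_re, Complex.sub_im, Complex.one_re, Complex.one_im,
      Complex.re_ofReal_mul, Complex.im_ofReal_mul, Complex.exp_ofReal_mul_I_re,
      Complex.exp_ofReal_mul_I_im]
    linear_combination x ^ 2 * sin_sq_add_cos_sq u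
  have hterm : ∀ n : ℕ, (z ^ n / n).re = x ^ n * cos (n * u) / n := fun n => by
    rw [Complex.div_natCast_re, mul_pow, ← Complex.exp_nat_mul, ← Complex.ofReal_pow,
      show (n : ℂ) * (u * Complex.I) = ((n * u : ℝ) : ℂ) * Complex.I by push_cast; ring,
      Complex.re_ofReal_mul, Complex.exp_ofReal_mul_I_re]
  have hlog : (-Complex.log (1 - z)).re = -log (1 - 2 * cos u * x + x ^ 2) / 2 := by
    rw [Complex.neg_re, Complex.log_re, ← hnorm, log_pow]
    push_cast; ring
  have hre := Complex.hasSum_re (Complex.hasSum_taylorSeries_neg_log hz)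
  simp only [hterm, hlog] at hre
  have hshift := ((hasSum_nat_add_iff' 1).mpr hre).mul_left 2
  simp only [Finset.sum_range_one, Nat.cast_zero, div_zero, sub_zero] at hshift
  rw [mul_div_cancel₀ _ two_ne_zero] at hshift
  refine hshift.congr_fun fun k => ?_
  push_cast; ring

theorem Real.hasSum_log_one_sub_pow_four_div_sq {x : ℝ} (hx : |x| < 1) (u : ℝ) :
    HasSum (fun k : ℕ => -4 * (1 - cos (((k : ℝ) + 1) * u)) * x ^ (k + 1) / ((k : ℝ) + 1))
      (log ((1 - x) ^ 4 / (1 - 2 * cos u * x + x ^ 2) ^ 2)) := by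
  have h1x : 0 < 1 - x := by linarith [le_abs_self x]
  have hD := one_sub_two_mul_cos_mul_add_sq_pos hx u
  have hval : log ((1 - x) ^ 4 / (1 - 2 * cos u * x + x ^ 2) ^ 2) =
      -4 * -log (1 - x) + 2 * -log (1 - 2 * cos u * x + x ^ 2) := by
    rw [log_div (by positivity) (by positivity), log_pow, log_pow]
    push_cast; ring
  rw [hval]
  exact (((hasSum_pow_div_log_of_abs_lt_one hx).mul_left (-4)).add
    ((hasSum_cos_mul_pow_div hx u).mul_left 2)).congr_fun fun k => by ring

theorem Real.hasSum_cos_sub_one (y : ℝ) :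
    HasSum (fun g : ℕ => (-1) ^ (g + 1) * y ^ (2 * (g + 1)) / ((2 * (g + 1)).factorial : ℝ))
      (cos y - 1) := by
  simpa using (hasSum_nat_add_iff' 1).mpr (hasSum_cos y)

theorem Real.hasSum_cosh_sub_one (y : ℝ) :
    HasSum (fun g : ℕ => y ^ (2 * (g + 1)) / ((2 * (g + 1)).factorial : ℝ)) (cosh y - 1) := by
  simpa using (hasSum_nat_add_iff' 1).mpr (hasSum_cosh y)

theorem one_sub_pow_pow_four_div_sq_pos {q : ℝ} (hq0 : 0 ≤ q) (hq1 : q < 1) (u : ℝ) (n : ℕ) :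
    0 < (1 - q ^ (n + 1)) ^ 4 / (1 - 2 * cos u * q ^ (n + 1) + q ^ (2 * (n + 1))) ^ 2 := by
  have hqn : q ^ (n + 1) < 1 := pow_lt_one₀ hq0 hq1 n.add_one_ne_zero
  have hD := one_sub_two_mul_cos_mul_add_sq_pos (x := q ^ (n + 1))
    (by rwa [abs_of_nonneg (by positivity)]) u
  rw [← pow_mul'] at hD
  have : 0 < 1 - q ^ (n + 1) := by linarith
  positivity

theorem hasSum_log_factor_iff {q : ℝ} (hq0 : 0 ≤ q) (hq1 : q < 1) (u : ℝ) {L : ℝ} :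
    HasSum (fun n : ℕ => log ((1 - q ^ (n + 1)) ^ 4 /
      (1 - 2 * cos u * q ^ (n + 1) + q ^ (2 * (n + 1))) ^ 2)) L ↔
    HasSum (fun k : ℕ => -4 * (1 - cos (((k : ℝ) + 1) * u)) / ((k : ℝ) + 1) *
      (q ^ (k + 1) / (1 - q ^ (k + 1)))) L := by
  set A : ℕ × ℕ → ℝ := fun p =>
    -4 * (1 - cos (((p.2 : ℝ) + 1) * u)) / ((p.2 : ℝ) + 1) * (q ^ (p.2 + 1)) ^ (p.1 + 1)
  have hA : Summable A := by
    refine ((summable_geometric_of_lt_one hq0 hq1).mul_of_nonneg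
      ((summable_geometric_of_lt_one hq0 hq1).mul_left (8 * q)) (fun _ => by positivity)
      (fun _ => by positivity)).of_norm_bounded fun ⟨n, k⟩ => ?_
    have hk : (1 : ℝ) ≤ (k : ℝ) + 1 := by linarith [k.cast_nonneg (α := ℝ)]
    have hcoeff : |-4 * (1 - cos (((k : ℝ) + 1) * u)) / ((k : ℝ) + 1)| ≤ 8 := by
      rw [abs_div, abs_mul, abs_of_pos (by linarith : (0 : ℝ) < k + 1),
        abs_of_nonneg (by linarith [cos_le_one (((k : ℝ) + 1) * u)] :
          0 ≤ 1 - cos (((k : ℝ) + 1) * u)), div_le_iff₀ (by linarith)]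
      norm_num
      nlinarith [neg_one_le_cos (((k : ℝ) + 1) * u)]
    have hpow : (q ^ (k + 1)) ^ (n + 1) ≤ q ^ n * q ^ (k + 1) := by
      rw [← pow_mul, ← pow_add]
      exact pow_le_pow_of_le_one hq0 hq1.le (by nlinarith)
    rw [norm_mul, Real.norm_eq_abs, norm_of_nonneg (by positivity)]
    calc _ ≤ 8 * (q ^ n * q ^ (k + 1)) := by gcongr
      _ = q ^ n * (8 * q * q ^ k) := by ring
  refine hA.hasSum_prod_fiberwise_iff (fun n => ?_) (fun k => ?_)
  · have hx : |q ^ (n + 1)| < 1 := by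
      rw [abs_of_nonneg (by positivity)]; exact pow_lt_one₀ hq0 hq1 n.add_one_ne_zero
    rw [pow_mul']
    refine (hasSum_log_one_sub_pow_four_div_sq hx u).congr_fun fun k => ?_
    simp only [A]
    ring
  · have hx : q ^ (k + 1) < 1 := pow_lt_one₀ hq0 hq1 k.add_one_ne_zero
    have hgeom : HasSum (fun n : ℕ => (q ^ (k + 1)) ^ (n + 1))
        (q ^ (k + 1) / (1 - q ^ (k + 1))) := by
      rw [div_eq_mul_inv]
      exact ((hasSum_geometric_of_lt_one (by positivity) hx).mul_left _).congr_fun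
        fun n => pow_succ' _ _
    exact hgeom.mul_left _

noncomputable def lambertSeriesTerm (m : ℕ) (q : ℝ) (k : ℕ) : ℝ :=
  ((k : ℝ) + 1) ^ m * q ^ (k + 1) / (1 - q ^ (k + 1))

/-- The `(k, g)` term of the double series obtained by expanding
`-4 (1 - cos ((k+1) u)) / (k+1) · q^(k+1) / (1 - q^(k+1))` in powers of `u`. -/
noncomputable def lambertCosTerm (q u : ℝ) (k g : ℕ) : ℝ :=
  4 * (-1) ^ (g + 1) * u ^ (2 * (g + 1)) / ((2 * (g + 1)).factorial : ℝ) *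
    lambertSeriesTerm (2 * (g + 1) - 1) q k

theorem summable_lambertSeriesTerm {q : ℝ} (hq0 : 0 ≤ q) (hq1 : q < 1) (m : ℕ) :
    Summable (lambertSeriesTerm m q) := by
  have hgeom : Summable fun k : ℕ => ((k : ℝ) + 1) ^ m * q ^ (k + 1) / (1 - q) := by
    have h : Summable fun k : ℕ => ((k + 1 : ℕ) : ℝ) ^ m * q ^ (k + 1) :=
      (summable_nat_add_iff (f := fun n : ℕ => (n : ℝ) ^ m * q ^ n) 1).mpr
        (summable_pow_mul_geometric_of_norm_lt_one m (by rwa [norm_of_nonneg hq0]))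
    exact (h.div_const (1 - q)).congr fun k => by push_cast; ring
  refine hgeom.of_nonneg_of_le (fun k => ?_) (fun k => ?_)
  · have := pow_lt_one₀ hq0 hq1 k.add_one_ne_zero
    exact div_nonneg (by positivity) (by linarith)
  · have := pow_le_of_le_one hq0 hq1.le k.add_one_ne_zero
    exact div_le_div_of_nonneg_left (by positivity) (by linarith) (by linarith)

theorem lambertCosTerm_eq (q u : ℝ) (k g : ℕ) :
    lambertCosTerm q u k g = 4 * (q ^ (k + 1) / (1 - q ^ (k + 1))) / ((k : ℝ) + 1) *
      ((-1) ^ (g + 1) * (((k : ℝ) + 1) * u) ^ (2 * (g + 1)) / ((2 * (g + 1)).factorial : ℝ)) := by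
  have hpow : ((k : ℝ) + 1) ^ (2 * (g + 1)) =
      ((k : ℝ) + 1) ^ (2 * (g + 1) - 1) * ((k : ℝ) + 1) := by
    rw [← pow_succ, Nat.sub_add_cancel (by omega)]
  rw [lambertCosTerm, lambertSeriesTerm, mul_pow, hpow]
  field_simp

theorem hasSum_lambertCosTerm_right (q u : ℝ) (k : ℕ) :
    HasSum (fun g => lambertCosTerm q u k g) (-4 * (1 - cos (((k : ℝ) + 1) * u)) / ((k : ℝ) + 1) *
      (q ^ (k + 1) / (1 - q ^ (k + 1)))) := by
  have h := (hasSum_cos_sub_one (((k : ℝ) + 1) * u)).mul_left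
    (4 * (q ^ (k + 1) / (1 - q ^ (k + 1))) / ((k : ℝ) + 1))
  rw [show 4 * (q ^ (k + 1) / (1 - q ^ (k + 1))) / ((k : ℝ) + 1) * (cos (((k : ℝ) + 1) * u) - 1)
    = -4 * (1 - cos (((k : ℝ) + 1) * u)) / ((k : ℝ) + 1) * (q ^ (k + 1) / (1 - q ^ (k + 1))) by
    ring] at h
  exact h.congr_fun (lambertCosTerm_eq q u k)

theorem hasSum_lambertCosTerm_left {q : ℝ} (hq0 : 0 ≤ q) (hq1 : q < 1) (u : ℝ) (g : ℕ) :
    HasSum (fun k => lambertCosTerm q u k g) (4 * (-1) ^ (g + 1) * u ^ (2 * (g + 1)) /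
      ((2 * (g + 1)).factorial : ℝ) * ∑' k, lambertSeriesTerm (2 * (g + 1) - 1) q k) :=
  (summable_lambertSeriesTerm hq0 hq1 _).hasSum.mul_left _

theorem summable_lambertCosTerm {q : ℝ} (hq0 : 0 ≤ q) {u : ℝ} (hqu : q * exp |u| < 1) :
    Summable fun p : ℕ × ℕ => lambertCosTerm q u p.1 p.2 := by
  have hq1 : q < 1 := (le_mul_of_one_le_right hq0 (one_le_exp (abs_nonneg u))).trans_lt hqu
  set c : ℕ → ℝ := fun k => 4 * (q ^ (k + 1) / (1 - q ^ (k + 1))) / ((k : ℝ) + 1)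
  have hc : ∀ k, 0 ≤ c k ∧ c k ≤ 4 / (1 - q) * q ^ (k + 1) := fun k => by
    have hk : (1 : ℝ) ≤ (k : ℝ) + 1 := by linarith [k.cast_nonneg (α := ℝ)]
    have hqk := pow_le_of_le_one hq0 hq1.le k.add_one_ne_zero
    have hqk' : 0 < 1 - q ^ (k + 1) := by linarith
    refine ⟨by positivity, ?_⟩
    calc c k ≤ 4 * (q ^ (k + 1) / (1 - q ^ (k + 1))) := div_le_self (by positivity) hk
      _ ≤ 4 * (q ^ (k + 1) / (1 - q)) := by gcongr
      _ = 4 / (1 - q) * q ^ (k + 1) := by ring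
  have hnorm : ∀ k g, ‖lambertCosTerm q u k g‖ =
      c k * ((((k : ℝ) + 1) * |u|) ^ (2 * (g + 1)) / ((2 * (g + 1)).factorial : ℝ)) := by
    intro k g
    rw [lambertCosTerm_eq, norm_mul, norm_of_nonneg (hc k).1, norm_div, norm_mul, norm_pow,
      norm_pow, norm_neg, norm_one, one_pow, one_mul, Real.norm_eq_abs, abs_mul,
      abs_of_pos (by positivity : (0 : ℝ) < k + 1), norm_of_nonneg (by positivity)]
  have hfiber : ∀ k, HasSum (fun g => ‖lambertCosTerm q u k g‖)
      (c k * (cosh (((k : ℝ) + 1) * |u|) - 1)) := fun k => by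
    simpa only [hnorm] using (hasSum_cosh_sub_one _).mul_left (c k)
  refine Summable.of_norm ((summable_prod_of_nonneg fun _ => norm_nonneg _).mpr
    ⟨fun k => (hfiber k).summable, ?_⟩)
  simp only [fun k => (hfiber k).tsum_eq]
  refine ((summable_geometric_of_lt_one (by positivity) hqu).mul_left
    (4 / (1 - q) * (q * exp |u|))).of_nonneg_of_le (fun k => mul_nonneg (hc k).1 ?_) (fun k => ?_)
  · exact sub_nonneg.mpr (one_le_cosh _)
  · have hy : 0 ≤ ((k : ℝ) + 1) * |u| := by positivity
    have hcosh : cosh (((k : ℝ) + 1) * |u|) - 1 ≤ exp (((k : ℝ) + 1) * |u|) := by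
      rw [cosh_eq]
      linarith [exp_le_exp.mpr (neg_le_self hy), exp_pos (((k : ℝ) + 1) * |u|)]
    calc c k * (cosh (((k : ℝ) + 1) * |u|) - 1)
        ≤ 4 / (1 - q) * q ^ (k + 1) * exp (((k : ℝ) + 1) * |u|) :=
          mul_le_mul (hc k).2 hcosh (sub_nonneg.mpr (one_le_cosh _)) (by positivity)
      _ = 4 / (1 - q) * (q * exp |u|) * (q * exp |u|) ^ k := by
          rw [show ((k : ℝ) + 1) * |u| = ((k + 1 : ℕ) : ℝ) * |u| by push_cast; ring, exp_nat_mul]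
          ring

theorem exists_hasSum_log_factor_and_lambert {q u : ℝ} (hq0 : 0 ≤ q) (hqu : q * exp |u| < 1) :
    ∃ L, HasSum (fun n : ℕ => log ((1 - q ^ (n + 1)) ^ 4 /
        (1 - 2 * cos u * q ^ (n + 1) + q ^ (2 * (n + 1))) ^ 2)) L ∧
      HasSum (fun g : ℕ => 4 * (-1) ^ (g + 1) * u ^ (2 * (g + 1)) /
        ((2 * (g + 1)).factorial : ℝ) * ∑' k, lambertSeriesTerm (2 * (g + 1) - 1) q k) L := by
  have hq1 : q < 1 := (le_mul_of_one_le_right hq0 (one_le_exp (abs_nonneg u))).trans_lt hqu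
  have hsum := summable_lambertCosTerm hq0 hqu
  have hk := hsum.hasSum.prod_fiberwise (hasSum_lambertCosTerm_right q u)
  exact ⟨_, (hasSum_log_factor_iff hq0 hq1 u).mpr hk, (hsum.hasSum_prod_fiberwise_iff
    (hasSum_lambertCosTerm_right q u) (hasSum_lambertCosTerm_left hq0 hq1 u)).mp hk⟩

theorem bernoulli_two_mul_ne_zero {m : ℕ} (hm : m ≠ 0) : bernoulli (2 * m) ≠ 0 := by
  intro h
  have hzeta := hasSum_zeta_nat hm
  rw [h] at hzeta
  have := le_hasSum hzeta 1 fun _ _ => by positivity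
  norm_num at this

theorem coeff_mul_Eis_succ (q u : ℝ) (g : ℕ) :
    u ^ (2 * (g + 1)) * ((-1 : ℝ) ^ (g + 1 + 1) * ((bernoulli (2 * (g + 1)) : ℚ) : ℝ) /
        (((g : ℝ) + 1) * ((Nat.factorial (2 * (g + 1)) : ℕ) : ℝ))) * Eis (g + 1) q =
      u ^ (2 * (g + 1)) * ((-1 : ℝ) ^ (g + 1 + 1) * ((bernoulli (2 * (g + 1)) : ℚ) : ℝ) /
        (((g : ℝ) + 1) * ((Nat.factorial (2 * (g + 1)) : ℕ) : ℝ))) +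
      4 * (-1) ^ (g + 1) * u ^ (2 * (g + 1)) / ((2 * (g + 1)).factorial : ℝ) *
        ∑' k, lambertSeriesTerm (2 * (g + 1) - 1) q k := by
  have hB : ((bernoulli (2 * (g + 1)) : ℚ) : ℝ) ≠ 0 :=
    Rat.cast_ne_zero.mpr (bernoulli_two_mul_ne_zero g.add_one_ne_zero)
  rw [Eis]
  simp only [lambertSeriesTerm]
  push_cast
  field_simp
  ring

/-- The exponentiated form of the Corollary 2 identity:
`((u/2)/sin(u/2))² ∏_{n≥1} (1-qⁿ)⁴/(1 - 2 cos(u) qⁿ + q^{2n})²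
  = exp(∑_{g≥1} u^{2g} ((-1)^{g+1} B_{2g}/(g (2g)!)) E_{2g}(q))`,
with the infinite product and the series converging. -/
theorem stmt3 (q u : ℝ) (hq0 : 0 < q) (hq1 : q < 1)
    (hu0 : 0 < |u|) (hu : |u| < min (2 * Real.pi) (Real.log (1 / q))) :
    (Multipliable fun n : ℕ =>
      (1 - q ^ (n + 1)) ^ 4 /
        (1 - 2 * Real.cos u * q ^ (n + 1) + q ^ (2 * (n + 1))) ^ 2) ∧
    (Summable fun g : ℕ =>
      u ^ (2 * (g + 1)) *
        ((-1 : ℝ) ^ (g + 1 + 1) * ((bernoulli (2 * (g + 1)) : ℚ) : ℝ) /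
          (((g : ℝ) + 1) * ((Nat.factorial (2 * (g + 1)) : ℕ) : ℝ))) *
        Eis (g + 1) q) ∧
    ((u / 2) / Real.sin (u / 2)) ^ 2 *
      ∏' n : ℕ, (1 - q ^ (n + 1)) ^ 4 /
        (1 - 2 * Real.cos u * q ^ (n + 1) + q ^ (2 * (n + 1))) ^ 2 =
      Real.exp (∑' g : ℕ, u ^ (2 * (g + 1)) *
        ((-1 : ℝ) ^ (g + 1 + 1) * ((bernoulli (2 * (g + 1)) : ℚ) : ℝ) /
          (((g : ℝ) + 1) * ((Nat.factorial (2 * (g + 1)) : ℕ) : ℝ))) *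
        Eis (g + 1) q) := by
  obtain ⟨hu2, hulog⟩ := lt_min_iff.mp hu
  have hqu : q * exp |u| < 1 := by
    rw [← lt_div_iff₀' hq0, ← exp_log (one_div_pos.mpr hq0)]
    exact exp_lt_exp.mpr hulog
  obtain ⟨L, hlog, hlambert⟩ := exists_hasSum_log_factor_and_lambert hq0.le hqu
  have hprod := hasProd_of_hasSum_log (one_sub_pow_pow_four_div_sq_pos hq0.le hq1 u) hlog
  have hsum := ((hasSum_two_log_div_sin_half (abs_pos.mp hu0) hu2).add hlambert).congr_fun
    (coeff_mul_Eis_succ q u)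
  refine ⟨hprod.multipliable, hsum.summable, ?_⟩
  have hsinc : 0 < (u / 2) / sin (u / 2) := by
    rw [← inv_div]
    exact inv_pos.mpr (sin_div_pos_of_abs_lt_pi (by simpa using hu0) (by
      rw [abs_div, abs_two]; linarith))
  rw [hsum.tsum_eq, hprod.tprod_eq, exp_add, two_mul, exp_add, exp_log hsinc]
  ring
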